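/- Boundedness of sublevel sets of the LQG cost: let 𝒟 ⊆ ℝ^{mN×pN} be a linear subspace such that K·G is nilpotent for every K ∈ 𝒟. Then for every K₀ ∈ 𝒟, the sublevel set ℒ = {K ∈ 𝒟 : J(K) ≤ J(K₀)} is a bounded subset of ℝ^{mN×pN}. -/

import Mathlib

open Matrix

noncomputable section

/-- Squared Frobenius norm of a real matrix. -/
def frobSq {a b : Type*} [Fintype a] [Fintype b] (A : Matrix a b ℝ) : ℝ :=
  ∑ i, ∑ j, (A i j) ^ 2

/-- Squared Euclidean norm of a real vector. -/
def vecSq {a : Type*} [Fintype a] (v : a → ℝ) : ℝ :=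
  ∑ i, (v i) ^ 2

/-- The finite-horizon LQG cost `J(K)` of the paper, written in terms of the
square roots `Msq = M^{1/2}`, `Swsq = Σw^{1/2}`, `Rsq = R^{1/2}`, `Svsq = Σv^{1/2}`. -/
def Jcost {nn mm pp : ℕ}
    (P11 : Matrix (Fin nn) (Fin nn) ℝ) (P12 : Matrix (Fin nn) (Fin mm) ℝ)
    (C : Matrix (Fin pp) (Fin nn) ℝ)
    (Msq Swsq : Matrix (Fin nn) (Fin nn) ℝ)
    (Rsq : Matrix (Fin mm) (Fin mm) ℝ) (Svsq : Matrix (Fin pp) (Fin pp) ℝ)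
    (μ : Fin nn → ℝ) (K : Matrix (Fin mm) (Fin pp) ℝ) : ℝ :=
  frobSq (Msq * (1 - P12 * K * C)⁻¹ * P11 * Swsq)
  + frobSq (Msq * P12 * K * (1 - C * P12 * K)⁻¹ * Svsq)
  + frobSq (Rsq * K * (1 - C * P12 * K)⁻¹ * C * P11 * Swsq)
  + frobSq (Rsq * K * (1 - C * P12 * K)⁻¹ * Svsq)
  + vecSq ((Msq * (1 - P12 * K * C)⁻¹ * P11).mulVec μ)
  + vecSq ((Rsq * K * (1 - C * P12 * K)⁻¹ * C * P11).mulVec μ)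

/-- The disturbance-feedback cost `J̃(Q)` of the paper, written in terms of the
square roots `Msq = M^{1/2}`, `Swsq = Σw^{1/2}`, `Rsq = R^{1/2}`, `Svsq = Σv^{1/2}`. -/
def Jtilde {nn mm pp : ℕ}
    (P11 : Matrix (Fin nn) (Fin nn) ℝ) (P12 : Matrix (Fin nn) (Fin mm) ℝ)
    (C : Matrix (Fin pp) (Fin nn) ℝ)
    (Msq Swsq : Matrix (Fin nn) (Fin nn) ℝ)
    (Rsq : Matrix (Fin mm) (Fin mm) ℝ) (Svsq : Matrix (Fin pp) (Fin pp) ℝ)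
    (μ : Fin nn → ℝ) (Q : Matrix (Fin mm) (Fin pp) ℝ) : ℝ :=
  frobSq (Msq * (1 + P12 * Q * C) * P11 * Swsq)
  + frobSq (Msq * P12 * Q * Svsq)
  + frobSq (Rsq * Q * C * P11 * Swsq)
  + frobSq (Rsq * Q * Svsq)
  + vecSq ((Rsq * Q * C * P11).mulVec μ)
  + vecSq ((Msq * (1 + P12 * Q * C) * P11).mulVec μ)

namespace Matrix.PosSemidef

/-- The positive semidefinite square root of a positive semidefinite matrix (the definition
`Matrix.PosSemidef.sqrt` of the older Mathlib, which has since been removed). -/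
def sqrt {n 𝕜 : Type*} [Fintype n] [DecidableEq n] [RCLike 𝕜] [PartialOrder 𝕜] {A : Matrix n n 𝕜}
    (hA : A.PosSemidef) : Matrix n n 𝕜 :=
  hA.1.eigenvectorUnitary.1 * diagonal ((↑) ∘ Real.sqrt ∘ hA.1.eigenvalues) *
  (star hA.1.eigenvectorUnitary : Matrix n n 𝕜)

end Matrix.PosSemidef

end

/-!
For the disturbance feedback `Q = K (I - G K)⁻¹` the cost dominates `‖R^{1/2} Q Σv^{1/2}‖_F²`,
and `R^{1/2}`, `Σv^{1/2}` are invertible, so on the sublevel set `Q` stays in a compact box.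
Conversely `K = Q (I + G Q)⁻¹`. Since `K G` is nilpotent, `det (I - G K) = 1`, so
`I + G Q = (I - G K)⁻¹` has determinant one and `K = Q · adj (I + G Q)` is a polynomial, hence
continuous, function of `Q`: the sublevel set lies in a continuous image of a compact set.
-/

namespace Matrix

variable {m p R : Type*} [Fintype m] [Fintype p] [DecidableEq m] [DecidableEq p]

lemma det_one_sub_of_isNilpotent [CommRing R] [IsDomain R] {N : Matrix p p R}
    (hN : IsNilpotent N) : (1 - N).det = 1 := by
  have hchar : N.charpoly = Polynomial.X ^ Fintype.card p :=
    sub_eq_zero.mp (isNilpotent_charpoly_sub_pow_of_isNilpotent hN).eq_zero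
  simpa [hchar] using (N.eval_charpoly 1).symm

lemma det_one_sub_mul_of_isNilpotent_mul [CommRing R] [IsDomain R] {K : Matrix m p R}
    {G : Matrix p m R} (h : IsNilpotent (K * G)) : (1 - G * K).det = 1 := by
  rw [det_one_sub_mul_comm]
  exact det_one_sub_of_isNilpotent h

lemma PosSemidef.sqrt_mul_self {A : Matrix p p ℝ} (hA : A.PosSemidef) :
    hA.sqrt * hA.sqrt = A := by
  set U : Matrix p p ℝ := hA.1.eigenvectorUnitary.1
  have hU : star U * U = 1 := Unitary.coe_star_mul_self _
  have hD : diagonal ((RCLike.ofReal : ℝ → ℝ) ∘ Real.sqrt ∘ hA.1.eigenvalues) *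
      diagonal ((RCLike.ofReal : ℝ → ℝ) ∘ Real.sqrt ∘ hA.1.eigenvalues) =
      diagonal (RCLike.ofReal ∘ hA.1.eigenvalues) := by
    rw [diagonal_mul_diagonal]
    congr 1
    funext i
    simp [Real.mul_self_sqrt (hA.eigenvalues_nonneg i)]
  conv_rhs => rw [hA.1.spectral_theorem, Unitary.conjStarAlgAut_apply]
  rw [← hD]
  simp only [PosSemidef.sqrt, Matrix.mul_assoc]
  rw [← Matrix.mul_assoc (star U), hU, Matrix.one_mul]

lemma PosDef.isUnit_sqrt {A : Matrix p p ℝ} (hA : A.PosDef) : IsUnit hA.posSemidef.sqrt :=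
  isUnit_of_mul_isUnit_left (hA.posSemidef.sqrt_mul_self ▸ hA.isUnit)

end Matrix

section Feedback

variable {m p R : Type*} [Fintype m] [Fintype p] [DecidableEq p] [CommRing R]

noncomputable def disturbanceFeedback (G : Matrix p m R) (K : Matrix m p R) : Matrix m p R :=
  K * (1 - G * K)⁻¹

def controllerOfDisturbanceFeedback (G : Matrix p m R) (Q : Matrix m p R) : Matrix m p R :=
  Q * adjugate (1 + G * Q)

lemma controllerOfDisturbanceFeedback_disturbanceFeedback {G : Matrix p m R}
    {K : Matrix m p R} (h : (1 - G * K).det = 1) :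
    controllerOfDisturbanceFeedback G (disturbanceFeedback G K) = K := by
  set A := 1 - G * K
  have hA : IsUnit A.det := h ▸ isUnit_one
  have hB : 1 + G * (K * A⁻¹) = A⁻¹ := by
    calc 1 + G * (K * A⁻¹) = (A + G * K) * A⁻¹ := by
          rw [Matrix.add_mul, mul_nonsing_inv A hA, Matrix.mul_assoc]
      _ = A⁻¹ := by simp [A]
  have hadj : adjugate A⁻¹ = A := by
    calc adjugate A⁻¹ = adjugate A⁻¹ * A⁻¹ * A := by
          rw [Matrix.mul_assoc, nonsing_inv_mul A hA, Matrix.mul_one]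
      _ = A := by simp [adjugate_mul, det_nonsing_inv, h]
  rw [controllerOfDisturbanceFeedback, disturbanceFeedback, hB, hadj, Matrix.mul_assoc,
    nonsing_inv_mul A hA, Matrix.mul_one]

lemma continuous_controllerOfDisturbanceFeedback [TopologicalSpace R] [IsTopologicalRing R]
    (G : Matrix p m R) : Continuous (controllerOfDisturbanceFeedback G) := by
  unfold controllerOfDisturbanceFeedback
  fun_prop

end Feedback

section Entries

variable {a b : Type*}

lemma isCompact_setOf_forall_abs_le (r : ℝ) :
    IsCompact {A : Matrix a b ℝ | ∀ i j, |A i j| ≤ r} := by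
  change IsCompact {A : a → b → ℝ | ∀ i j, |A i j| ≤ r}
  convert (isCompact_Icc : IsCompact (Set.Icc (fun _ _ => -r : a → b → ℝ) fun _ _ => r)) using 1
  ext A
  simp only [Set.mem_ofPred_eq, Set.mem_Icc, Pi.le_def, abs_le, forall_and]

variable [Fintype a] [Fintype b]

lemma frobSq_nonneg (A : Matrix a b ℝ) : 0 ≤ frobSq A := by
  unfold frobSq; positivity

lemma vecSq_nonneg (v : a → ℝ) : 0 ≤ vecSq v := by
  unfold vecSq; positivity

lemma sq_le_frobSq (A : Matrix a b ℝ) (i : a) (j : b) : A i j ^ 2 ≤ frobSq A :=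
  calc A i j ^ 2 ≤ ∑ j', A i j' ^ 2 :=
        Finset.single_le_sum (fun _ _ => sq_nonneg _) (Finset.mem_univ j)
    _ ≤ frobSq A :=
        Finset.single_le_sum (f := fun i' => ∑ j', A i' j' ^ 2)
          (fun _ _ => Finset.sum_nonneg fun _ _ => sq_nonneg _) (Finset.mem_univ i)

lemma IsCompact.exists_forall_abs_le {s : Set (Matrix a b ℝ)} (hs : IsCompact s) :
    ∃ B, ∀ A ∈ s, ∀ i j, |A i j| ≤ B := by
  let _ := Matrix.normedAddCommGroup (m := a) (n := b) (α := ℝ)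
  obtain ⟨B, hB⟩ := hs.exists_bound_of_continuousOn continuousOn_id
  exact ⟨B, fun A hA i j => (norm_entry_le_entrywise_sup_norm A).trans (hB A hA)⟩

end Entries

lemma frobSq_mul_disturbanceFeedback_mul_le_Jcost {nn mm pp : ℕ}
    (P11 : Matrix (Fin nn) (Fin nn) ℝ) (P12 : Matrix (Fin nn) (Fin mm) ℝ)
    (C : Matrix (Fin pp) (Fin nn) ℝ) (Msq Swsq : Matrix (Fin nn) (Fin nn) ℝ)
    (Rsq : Matrix (Fin mm) (Fin mm) ℝ) (Svsq : Matrix (Fin pp) (Fin pp) ℝ)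
    (μ : Fin nn → ℝ) (K : Matrix (Fin mm) (Fin pp) ℝ) :
    frobSq (Rsq * disturbanceFeedback (C * P12) K * Svsq) ≤
      Jcost P11 P12 C Msq Swsq Rsq Svsq μ K := by
  rw [disturbanceFeedback, ← Matrix.mul_assoc Rsq, Jcost]
  linarith [frobSq_nonneg (Msq * (1 - P12 * K * C)⁻¹ * P11 * Swsq),
    frobSq_nonneg (Msq * P12 * K * (1 - C * P12 * K)⁻¹ * Svsq),
    frobSq_nonneg (Rsq * K * (1 - C * P12 * K)⁻¹ * C * P11 * Swsq),
    vecSq_nonneg ((Msq * (1 - P12 * K * C)⁻¹ * P11).mulVec μ),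
    vecSq_nonneg ((Rsq * K * (1 - C * P12 * K)⁻¹ * C * P11).mulVec μ)]

theorem sublevel_sets_bounded_general {n m p N : ℕ}
    (P11 : Matrix (Fin (n * (N + 1))) (Fin (n * (N + 1))) ℝ)
    (P12 : Matrix (Fin (n * (N + 1))) (Fin (m * N)) ℝ)
    (C : Matrix (Fin (p * N)) (Fin (n * (N + 1))) ℝ)
    {M W : Matrix (Fin (n * (N + 1))) (Fin (n * (N + 1))) ℝ}
    {R : Matrix (Fin (m * N)) (Fin (m * N)) ℝ}
    {V : Matrix (Fin (p * N)) (Fin (p * N)) ℝ}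
    (hM : M.PosSemidef) (hW : W.PosSemidef) (hR : R.PosDef) (hV : V.PosDef)
    (μ : Fin (n * (N + 1)) → ℝ)
    (G : Matrix (Fin (p * N)) (Fin (m * N)) ℝ) (hG : G = C * P12)
    (𝒟 : Submodule ℝ (Matrix (Fin (m * N)) (Fin (p * N)) ℝ))
    (hnilp : ∀ K ∈ 𝒟, IsNilpotent (K * G))
    (K₀ : Matrix (Fin (m * N)) (Fin (p * N)) ℝ) :
    ∃ B : ℝ, ∀ K ∈ 𝒟,
      Jcost P11 P12 C hM.sqrt hW.sqrt hR.posSemidef.sqrt hV.posSemidef.sqrt μ K ≤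
        Jcost P11 P12 C hM.sqrt hW.sqrt hR.posSemidef.sqrt hV.posSemidef.sqrt μ K₀ →
      ∀ i j, |K i j| ≤ B := by
  subst hG
  set Rsq := hR.posSemidef.sqrt
  set Svsq := hV.posSemidef.sqrt
  have : Invertible Rsq := hR.isUnit_sqrt.invertible
  have : Invertible Svsq := hV.isUnit_sqrt.invertible
  set J₀ := Jcost P11 P12 C hM.sqrt hW.sqrt Rsq Svsq μ K₀
  let Φ (Y : Matrix (Fin (m * N)) (Fin (p * N)) ℝ) :=
    controllerOfDisturbanceFeedback (C * P12) (Rsq⁻¹ * Y * Svsq⁻¹)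
  have hΦ : Continuous Φ := (continuous_controllerOfDisturbanceFeedback _).comp
    ((continuous_const.matrix_mul continuous_id).matrix_mul continuous_const)
  obtain ⟨B, hB⟩ := ((isCompact_setOf_forall_abs_le √J₀).image hΦ).exists_forall_abs_le
  refine ⟨B, fun K hK hle => hB K ⟨Rsq * disturbanceFeedback (C * P12) K * Svsq, ?_, ?_⟩⟩
  · exact fun i j => Real.abs_le_sqrt ((sq_le_frobSq _ i j).trans
      ((frobSq_mul_disturbanceFeedback_mul_le_Jcost P11 P12 C _ _ _ _ μ K).trans hle))
  · dsimp only [Φ]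
    rw [Matrix.mul_assoc Rsq, inv_mul_cancel_left_of_invertible,
      mul_inv_cancel_right_of_invertible]
    exact controllerOfDisturbanceFeedback_disturbanceFeedback
      (Matrix.det_one_sub_mul_of_isNilpotent_mul (hnilp K hK))

/-- Boundedness of sublevel sets of the LQG cost: if `𝒟` is a linear subspace
of `ℝ^{mN×pN}` on which `K·G` is nilpotent (`G = C·P12`), then for every `K₀ ∈ 𝒟` the sublevel
set `{K ∈ 𝒟 : J(K) ≤ J(K₀)}` is bounded (all entries of its elements are uniformly bounded). -/
theorem sublevel_sets_bounded {n m p N : ℕ}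
    (hn : 0 < n) (hm : 0 < m) (hp : 0 < p) (hN : 0 < N)
    (P11 : Matrix (Fin (n * (N + 1))) (Fin (n * (N + 1))) ℝ)
    (P12 : Matrix (Fin (n * (N + 1))) (Fin (m * N)) ℝ)
    (C : Matrix (Fin (p * N)) (Fin (n * (N + 1))) ℝ)
    {M W : Matrix (Fin (n * (N + 1))) (Fin (n * (N + 1))) ℝ}
    {R : Matrix (Fin (m * N)) (Fin (m * N)) ℝ}
    {V : Matrix (Fin (p * N)) (Fin (p * N)) ℝ}
    (hM : M.PosSemidef) (hW : W.PosSemidef) (hR : R.PosDef) (hV : V.PosDef)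
    (μ : Fin (n * (N + 1)) → ℝ)
    (G : Matrix (Fin (p * N)) (Fin (m * N)) ℝ) (hG : G = C * P12)
    (𝒟 : Submodule ℝ (Matrix (Fin (m * N)) (Fin (p * N)) ℝ))
    (hnilp : ∀ K ∈ 𝒟, IsNilpotent (K * G))
    (K₀ : Matrix (Fin (m * N)) (Fin (p * N)) ℝ) (hK₀ : K₀ ∈ 𝒟) :
    ∃ B : ℝ, ∀ K ∈ 𝒟,
      Jcost P11 P12 C hM.sqrt hW.sqrt hR.posSemidef.sqrt hV.posSemidef.sqrt μ K ≤
        Jcost P11 P12 C hM.sqrt hW.sqrt hR.posSemidef.sqrt hV.posSemidef.sqrt μ K₀ →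
      ∀ i j, |K i j| ≤ B :=
  sublevel_sets_bounded_general P11 P12 C hM hW hR hV μ G hG 𝒟 hnilp K₀
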